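/- Let d≥2 and let C be a pure normal simplicial complex of dimension d−1 on n vertices. Then the diameter of the dual graph of C is at most n·2^{d−2}. -/

import Mathlib

/-! Common definitions: pure simplicial complexes (represented by their facet sets),
vertex-distance, links, ordered facets, vectors of distances, admissibility, and
monotone/conservative dual paths, following Adiprasito–Benedetti's combinatorial
segments. -/

open scoped Classical

noncomputable section

namespace MCP

variable {V : Type} [DecidableEq V] [Fintype V]

/-- The vertex set of the complex whose set of facets is `C`. -/
def verts (C : Finset (Finset V)) : Finset V := C.sup id

/-- `f` is a face of the pure complex with facet set `C`. -/
def IsFace (C : Finset (Finset V)) (f : Finset V) : Prop := ∃ F ∈ C, f ⊆ F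

/-- `C` is pure of dimension `d - 1`: every facet has `d` vertices. -/
def Pure (C : Finset (Finset V)) (d : ℕ) : Prop := ∀ F ∈ C, F.card = d

/-- The 1-skeleton of the complex: two vertices are joined iff they lie in a common facet. -/
def skeleton (C : Finset (Finset V)) : SimpleGraph V where
  Adj u v := u ≠ v ∧ ∃ F ∈ C, u ∈ F ∧ v ∈ F
  symm := by
    refine ⟨?_⟩
    rintro u v ⟨h, F, hF, hu, hv⟩
    exact ⟨h.symm, F, hF, hv, hu⟩
  loopless := by refine ⟨?_⟩; rintro u ⟨h, -⟩; exact h rfl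

/-- Two facets are adjacent in the dual graph iff they differ in a single vertex. -/
def AdjFacets (F G : Finset V) : Prop :=
  F ≠ G ∧ F.card = G.card ∧ (F ∩ G).card + 1 = F.card

/-- A dual path: a list of facets of `C` in which consecutive facets are adjacent. -/
def IsDualPath (C : Finset (Finset V)) (P : List (Finset V)) : Prop :=
  (∀ F ∈ P, F ∈ C) ∧ P.Chain' AdjFacets

/-- `C` is normal: for every face `f`, any two facets containing `f` are joined by a
dual path all of whose facets contain `f`. -/
def Normal (C : Finset (Finset V)) : Prop :=
  ∀ f : Finset V, ∀ F ∈ C, ∀ G ∈ C, f ⊆ F → f ⊆ G →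
    ∃ P : List (Finset V), P.head? = some F ∧ P.getLast? = some G ∧
      (∀ H ∈ P, H ∈ C ∧ f ⊆ H) ∧ P.Chain' AdjFacets

/-- The (facet set of the) link of a vertex `x` in `C`. -/
def link (C : Finset (Finset V)) (x : V) : Finset (Finset V) :=
  (C.filter (fun F => x ∈ F)).image (fun F => F.erase x)

/-- Vertex-distance (in the 1-skeleton) between two sets of vertices, with value `⊤`
if one of the sets is empty, and with the special `0/1` convention when the complex
is `0`-dimensional. -/
def vdistSets (C : Finset (Finset V)) (S T : Finset V) : ℕ∞ :=
  if C.sup Finset.card ≤ 1 then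
    (if S.Nonempty ∧ T.Nonempty then (if (S ∩ T).Nonempty then 0 else 1) else ⊤)
  else ⨅ u ∈ S, ⨅ v ∈ T, (skeleton C).edist u v

/-- The derived target set `S'` in the link of `x`, used in the recursive definitions
of the vector of distances and of admissibility. -/
def targetSet (C : Finset (Finset V)) (x : V) (S : Finset V) : Finset V :=
  if x ∈ S then S ∩ verts (link C x)
  else (verts (link C x)).filter
    (fun w => vdistSets C {w} S + 1 = vdistSets C {x} S)

/-- The vector of distances from an ordered facet (a list of vertices) to a target set. -/
def distVector : Finset (Finset V) → List V → Finset V → List ℕ∞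
  | _, [], _ => []
  | C, x :: rest, S => vdistSets C {x} S :: distVector (link C x) rest (targetSet C x S)

/-- Admissibility of an ordering of a facet with respect to a target set: the first
vertex realizes the vertex-distance from the facet to the target set, and recursively
in the link. -/
def Admissible : Finset (Finset V) → List V → Finset V → Prop
  | _, [], _ => True
  | C, x :: rest, S =>
      vdistSets C {x} S = vdistSets C (x :: rest).toFinset S ∧
      Admissible (link C x) rest (targetSet C x S)

/-- An ordered facet of `C`: a repetition-free list of vertices forming a facet. -/
def IsOrderedFacet (C : Finset (Finset V)) (L : List V) : Prop :=
  L.Nodup ∧ L.toFinset ∈ C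

/-- A dual path of ordered facets. -/
def IsOrderedDualPath (C : Finset (Finset V)) (Γ : List (List V)) : Prop :=
  (∀ L ∈ Γ, IsOrderedFacet C L) ∧
  Γ.Chain' (fun L M => AdjFacets L.toFinset M.toFinset)

/-- A path of ordered facets is monotone towards `S` if its vectors of distances are
strictly lexicographically decreasing. -/
def MonotonePath (C : Finset (Finset V)) (S : Finset V) (Γ : List (List V)) : Prop :=
  Γ.Chain' (fun L M => List.Lex (· < ·) (distVector C M S) (distVector C L S))

/-- The index of a step: the least position at which the two orderings differ. -/
def stepIndex (L M : List V) : ℕ := sInf {k : ℕ | L[k]? ≠ M[k]?}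

/-- The step from `L` to `M` is conservative towards `S`: the removed vertex is the last
vertex of `L`, and `M` is admissibly ordered with maximum index among all admissible
reorderings. -/
def ConservativeStep (C : Finset (Finset V)) (S : Finset V) (L M : List V) : Prop :=
  (∃ x, L.getLast? = some x ∧ L.toFinset \ M.toFinset = {x}) ∧
  Admissible C M S ∧
  ∀ M' : List V, M'.Perm M → Admissible C M' S → stepIndex L M' ≤ stepIndex L M

/-- A path of ordered facets is conservative towards `S` if its first facet is
admissibly ordered and every step is conservative. -/
def ConservativePath (C : Finset (Finset V)) (S : Finset V) (Γ : List (List V)) : Prop :=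
  (∀ L ∈ Γ.head?, Admissible C L S) ∧ Γ.Chain' (ConservativeStep C S)

/-- A monotone conservative dual path of ordered facets towards `S`. -/
def MonoConsPath (C : Finset (Finset V)) (S : Finset V) (Γ : List (List V)) : Prop :=
  IsOrderedDualPath C Γ ∧ MonotonePath C S Γ ∧ ConservativePath C S Γ

/-- The path `Γ` starts at the facet `F`. -/
def StartsAt (Γ : List (List V)) (F : Finset V) : Prop :=
  ∃ L, Γ.head? = some L ∧ L.toFinset = F

/-- The path `Γ` ends at the facet `F`. -/
def EndsAt (Γ : List (List V)) (F : Finset V) : Prop :=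
  ∃ L, Γ.getLast? = some L ∧ L.toFinset = F

/-- `C` is flag: every set of vertices of `C` pairwise joined by edges of `C` is a face. -/
def Flag (C : Finset (Finset V)) : Prop :=
  ∀ T : Finset V, T ⊆ verts C →
    (∀ u ∈ T, ∀ v ∈ T, u ≠ v → (skeleton C).Adj u v) → IsFace C T

/-- A critical clique: a clique of the 1-skeleton that becomes a face after removing a
suitable vertex. -/
def CriticalClique (C : Finset (Finset V)) (T : Finset V) : Prop :=
  (∀ u ∈ T, ∀ v ∈ T, u ≠ v → (skeleton C).Adj u v) ∧ ∃ v ∈ T, IsFace C (T.erase v)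

/-- `C` is `k`-banner: every critical clique with at least `k + 1` vertices is a face. -/
def Banner (C : Finset (Finset V)) (k : ℕ) : Prop :=
  ∀ T : Finset V, CriticalClique C T → k + 1 ≤ T.card → IsFace C T

/-- A pure `(d-1)`-complex is a pseudomanifold (possibly with boundary) if every
`(d-2)`-dimensional face lies in at most two facets. -/
def Pseudomanifold (C : Finset (Finset V)) (d : ℕ) : Prop :=
  ∀ f : Finset V, f.card + 1 = d → IsFace C f → (C.filter (fun F => f ⊆ F)).card ≤ 2

/-- A pure `(d-1)`-complex is a pseudomanifold without boundary if every
`(d-2)`-dimensional face lies in exactly two facets. -/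
def PseudomanifoldNoBoundary (C : Finset (Finset V)) (d : ℕ) : Prop :=
  ∀ f : Finset V, f.card + 1 = d → IsFace C f → (C.filter (fun F => f ⊆ F)).card = 2

/-- The join of two complexes (given by their facet sets, on disjoint vertex sets). -/
def join (C₁ C₂ : Finset (Finset V)) : Finset (Finset V) :=
  (C₁ ×ˢ C₂).image (fun p => p.1 ∪ p.2)

/-- The one-point-suspension of `C` at the vertex `v`; the two new suspension vertices
are `Sum.inr false` and `Sum.inr true`. -/
def ops (C : Finset (Finset V)) (v : V) : Finset (Finset (V ⊕ Bool)) :=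
  ((C.filter (fun F => v ∈ F)).image
      (fun F => ((F.erase v).image Sum.inl) ∪ {Sum.inr false, Sum.inr true}))
  ∪ ((C.filter (fun F => v ∉ F)).image (fun F => (F.image Sum.inl) ∪ {Sum.inr false}))
  ∪ ((C.filter (fun F => v ∉ F)).image (fun F => (F.image Sum.inl) ∪ {Sum.inr true}))

/-- The degree of a vertex in the 1-skeleton of `C`. -/
def degree (C : Finset (Finset V)) (x : V) : ℕ :=
  (Finset.univ.filter fun w => (skeleton C).Adj x w).card

/-- Vertex-decomposability of a pure complex given by its facet set: either a single
simplex, or there is a vertex whose deletion stays pure of the same dimension and whose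
link and deletion are both vertex-decomposable.  (The condition
`∀ F ∈ C, ∃ G ∈ C, x ∉ G ∧ F.erase x ⊆ G` expresses that the deletion of `x` is pure
of the same dimension, so that its facets are the facets of `C` avoiding `x`.) -/
inductive VertexDecomposable : Finset (Finset V) → Prop
  | simplex (F : Finset V) : VertexDecomposable {F}
  | step (C : Finset (Finset V)) (x : V) (hx : x ∈ verts C)
      (hdelpure : ∀ F ∈ C, ∃ G ∈ C, x ∉ G ∧ F.erase x ⊆ G)
      (hlink : VertexDecomposable (link C x))
      (hdel : VertexDecomposable (C.filter (fun F => x ∉ F))) :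
      VertexDecomposable C

/-- The maximum length (number of steps) of a monotone conservative path in `C`, over
all nonempty target sets of vertices of `C`. -/
def maxl (C : Finset (Finset V)) : ℕ :=
  sSup {n : ℕ | ∃ (S : Finset V) (Γ : List (List V)), S.Nonempty ∧ S ⊆ verts C ∧
    MonoConsPath C S Γ ∧ Γ.length = n + 1}

/-- `CombSeg C Γ S x₀`: the dual path `Γ` is a combinatorial segment in `C` from its
first facet to the target set `S`, anchored at `x₀` (Adiprasito–Benedetti). -/
inductive CombSeg : Finset (Finset V) → List (Finset V) → Finset V → V → Prop
  | intersects (C : Finset (Finset V)) (F S : Finset V) (x₀ : V)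
      (hF : F ∈ C) (hx : x₀ ∈ F) (hFS : (F ∩ S).Nonempty) :
      CombSeg C [F] S x₀
  | dimOne (C : Finset (Finset V)) (S : Finset V) (x₀ v : V)
      (hdim : ∀ F ∈ C, F.card = 1)
      (h₁ : {x₀} ∈ C) (h₂ : {v} ∈ C) (hx : x₀ ∉ S) (hv : v ∈ S) :
      CombSeg C [{x₀}, {v}] S x₀
  | step (C : Finset (Finset V)) (F₀ : Finset V) (Γ₁ Γ₂ : List (Finset V))
      (Fk S : Finset V) (x₀ y x₀' : V) (ℓ : ℕ∞)
      (hdim : ∀ F ∈ C, 2 ≤ F.card)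
      (hmem : ∀ F ∈ F₀ :: Γ₁, F ∈ C)
      (hdisj : ∀ F ∈ F₀ :: Γ₁, F ∩ S = ∅)
      (hℓ : vdistSets C F₀ S = ℓ)
      (hbefore : ∀ F ∈ F₀ :: Γ₁, ¬ vdistSets C F S < ℓ)
      (hafter : vdistSets C Fk S < ℓ)
      (hy : y ∈ Fk)
      (hyd : vdistSets C {y} S + 1 = ℓ)
      (hyuniq : ∀ z ∈ Fk, vdistSets C {z} S + 1 = ℓ → z = y)
      (hx₀ : ∀ F ∈ F₀ :: Γ₁, x₀ ∈ F) (hx₀k : x₀ ∈ Fk)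
      (hlink : CombSeg (link C x₀)
          (((F₀ :: Γ₁) ++ [Fk]).map (fun F => F.erase x₀))
          ((verts (link C x₀)).filter (fun w => vdistSets C {w} S + 1 = ℓ)) x₀')
      (htail : CombSeg C (Fk :: Γ₂) S y) :
      CombSeg C (F₀ :: Γ₁ ++ Fk :: Γ₂) S x₀

end MCP

/-!
Say that a dual path drops a vertex `w` at a step `X → Y` if `w ∈ X \ Y`. One vertex is dropped
per step, so the length of a dual path is the sum over all vertices of their drop counts, and it
suffices to join any two facets by a dual path that drops no vertex more than `2 ^ (d - 2)` times.
This is proved by induction on `d`, passing to links.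

Let `δ` be the distance to a target set `S` in the 1-skeleton. From a facet containing `x` with
`δ x = L + 1`, walk inside the star of `x` (a path in the link of `x`, dropping each vertex at most
`b` times) to a facet containing a vertex at distance `L`, and repeat. Inside the star of a vertex
at distance `j` only vertices at distance `j` or `j + 1` are dropped, so a vertex at distance `m`
is dropped at most `2b` times, at most `b` times if `m = 1`, and never if `m = 0`. To reach a
facet `G`, take `S = G` and then walk to `G` inside the star of a vertex `x₀ ∈ G` of the facet
reached: the vertices dropped there either lie in `G`, and were never dropped before, or are
neighbours of `x₀` outside `G`, at distance `1`. For `d = 2` walking along shortest paths of the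
graph drops every vertex at most once.
-/

namespace MCP

open Finset

variable {V : Type}

def distToSet (C : Finset (Finset V)) (S : Finset V) (w : V) : ℕ∞ :=
  S.inf fun s => (skeleton C).edist w s

section DistToSet

variable {C : Finset (Finset V)} {S : Finset V}

theorem distToSet_le {w s : V} (hs : s ∈ S) : distToSet C S w ≤ (skeleton C).edist w s :=
  inf_le hs

theorem distToSet_eq_zero_iff {w : V} : distToSet C S w = 0 ↔ w ∈ S := by
  rw [← bot_eq_zero, distToSet, Finset.inf_eq_bot_iff]
  simp

theorem exists_distToSet_eq_edist {w : V} (h : distToSet C S w ≠ ⊤) :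
    ∃ s ∈ S, distToSet C S w = (skeleton C).edist w s := by
  refine exists_mem_eq_inf S (nonempty_iff_ne_empty.2 ?_) _
  rintro rfl
  exact h rfl

theorem distToSet_le_add_one_of_adj {u v : V} (huv : (skeleton C).Adj u v) :
    distToSet C S u ≤ distToSet C S v + 1 := by
  rcases eq_or_ne (distToSet C S v) ⊤ with h | h
  · simp [h]
  obtain ⟨s, hs, hvs⟩ := exists_distToSet_eq_edist h
  calc distToSet C S u ≤ (skeleton C).edist u s := distToSet_le hs
    _ ≤ (skeleton C).edist u v + (skeleton C).edist v s := SimpleGraph.edist_triangle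
    _ = distToSet C S v + 1 := by
      rw [SimpleGraph.edist_eq_one_iff_adj.2 huv, hvs, add_comm]

theorem exists_adj_distToSet_eq {x : V} {L : ℕ} (hx : distToSet C S x = L + 1) :
    ∃ y, (skeleton C).Adj x y ∧ distToSet C S y = L := by
  obtain ⟨s, hs, hxs⟩ := exists_distToSet_eq_edist (C := C) (S := S) (w := x) (by simp [hx])
  obtain ⟨p, hp⟩ := SimpleGraph.exists_walk_of_edist_eq_coe (k := L + 1) (by rw [← hxs, hx]; rfl)
  cases p with
  | nil => simp at hp
  | @cons _ y _ hxy q =>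
    refine ⟨y, hxy, le_antisymm ?_ ?_⟩
    · calc distToSet C S y ≤ (skeleton C).edist y s := distToSet_le hs
        _ ≤ q.length := SimpleGraph.edist_le q
        _ = L := by simp_all
    · have := distToSet_le_add_one_of_adj (S := S) hxy
      rwa [hx, ENat.add_le_add_iff_right ENat.one_ne_top] at this

theorem distToSet_eq_one_of_adj {w x : V} (hx : x ∈ S) (hw : w ∉ S)
    (hwx : (skeleton C).Adj w x) : distToSet C S w = 1 := by
  refine le_antisymm ?_ (Order.one_le_iff_ne_zero.2 fun h => hw (distToSet_eq_zero_iff.1 h))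
  simpa [distToSet_eq_zero_iff.2 hx] using distToSet_le_add_one_of_adj (S := S) hwx

end DistToSet

theorem Pure.nonempty {C : Finset (Finset V)} {k : ℕ} (hpure : Pure C k) {F : Finset V}
    (hF : F ∈ C) (hk : 0 < k) : F.Nonempty :=
  card_pos.1 (hpure F hF ▸ hk)

variable [DecidableEq V]

def dropCount (w : V) : List (Finset V) → ℕ
  | X :: Y :: P => (if w ∈ X ∧ w ∉ Y then 1 else 0) + dropCount w (Y :: P)
  | _ => 0

@[simp] theorem dropCount_nil (w : V) : dropCount w [] = 0 := rfl

@[simp] theorem dropCount_singleton (w : V) (X : Finset V) : dropCount w [X] = 0 := rfl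

theorem dropCount_cons_cons (w : V) (X Y : Finset V) (P : List (Finset V)) :
    dropCount w (X :: Y :: P) = (if w ∈ X ∧ w ∉ Y then 1 else 0) + dropCount w (Y :: P) :=
  rfl

theorem dropCount_cons {w : V} {F G : Finset V} {P : List (Finset V)} (hP : P.head? = some G) :
    dropCount w (F :: P) = (if w ∈ F ∧ w ∉ G then 1 else 0) + dropCount w P := by
  obtain ⟨P, rfl⟩ := List.head?_eq_some_iff.1 hP
  rfl

theorem dropCount_eq_zero_of_forall_notMem {w : V} :
    ∀ {P : List (Finset V)}, (∀ X ∈ P, w ∉ X) → dropCount w P = 0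
  | [], _ | [_], _ => rfl
  | X :: Y :: P, h => by
    rw [dropCount_cons_cons, if_neg fun hw => h X (by simp) hw.1,
      dropCount_eq_zero_of_forall_notMem fun Z hZ => h Z (List.mem_cons_of_mem _ hZ)]

theorem dropCount_eq_zero_of_forall_mem {w : V} :
    ∀ {P : List (Finset V)}, (∀ X ∈ P, w ∈ X) → dropCount w P = 0
  | [], _ | [_], _ => rfl
  | X :: Y :: P, h => by
    rw [dropCount_cons_cons, if_neg fun hw => hw.2 (h Y (by simp)),
      dropCount_eq_zero_of_forall_mem fun Z hZ => h Z (List.mem_cons_of_mem _ hZ)]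

theorem dropCount_append_cons (w : V) (G : Finset V) (Q : List (Finset V)) :
    ∀ P : List (Finset V),
      dropCount w (P ++ G :: Q) = dropCount w (P ++ [G]) + dropCount w (G :: Q)
  | [] => by simp
  | [X] => by simp [dropCount_cons_cons]
  | X :: Y :: P => by
    simp only [List.cons_append, dropCount_cons_cons]
    rw [← List.cons_append, ← List.cons_append, dropCount_append_cons w G Q (Y :: P), add_assoc]

theorem dropCount_append_tail {w : V} {G : Finset V} {P Q : List (Finset V)}
    (hP : P.getLast? = some G) (hQ : Q.head? = some G) :
    dropCount w (P ++ Q.tail) = dropCount w P + dropCount w Q := by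
  obtain ⟨P, rfl⟩ := List.getLast?_eq_some_iff.1 hP
  obtain ⟨Q, rfl⟩ := List.head?_eq_some_iff.1 hQ
  simpa using dropCount_append_cons w G Q P

theorem dropCount_map_insert {w x : V} (hwx : w ≠ x) :
    ∀ P : List (Finset V), dropCount w (P.map (insert x)) = dropCount w P
  | [] | [_] => rfl
  | X :: Y :: P => by
    simp only [List.map_cons, dropCount_cons_cons, mem_insert, hwx, false_or]
    rw [← List.map_cons, dropCount_map_insert hwx]

theorem AdjFacets.card_sdiff {X Y : Finset V} (h : AdjFacets X Y) : (X \ Y).card = 1 := by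
  have := card_sdiff_add_card_inter X Y
  have := h.2.2
  omega

theorem sum_dropCount [Fintype V] {P : List (Finset V)} (hP : P.IsChain AdjFacets) :
    ∑ w, dropCount w P = P.length - 1 := by
  induction P using List.twoStepInduction with
  | nil | singleton => simp
  | cons_cons X Y P _ ih =>
    obtain ⟨hXY, hP⟩ := List.isChain_cons_cons.1 hP
    simp only [dropCount_cons_cons, sum_add_distrib, ih Y hP, sum_boole, List.length_cons]
    have : (univ.filter fun w => w ∈ X ∧ w ∉ Y) = X \ Y := by ext; simp
    rw [this, Nat.cast_id, hXY.card_sdiff]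
    omega

theorem adjFacets_insert_iff {f g : Finset V} {x : V} (hf : x ∉ f) (hg : x ∉ g) :
    AdjFacets (insert x f) (insert x g) ↔ AdjFacets f g := by
  have hfg : x ∉ f ∩ g := fun h => hf (mem_inter.1 h).1
  simp only [AdjFacets, ← insert_inter_distrib, card_insert_of_notMem hf,
    card_insert_of_notMem hg, card_insert_of_notMem hfg, Nat.add_right_cancel_iff]
  refine and_congr_left' ⟨fun h hfg => h (hfg ▸ rfl), fun h hfg => h ?_⟩
  rw [← erase_insert hf, hfg, erase_insert hg]

theorem adjFacets_of_card_eq_two {X Y : Finset V} (hX : X.card = 2) (hY : Y.card = 2)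
    (hXY : X ≠ Y) (hmeet : (X ∩ Y).Nonempty) : AdjFacets X Y := by
  refine ⟨hXY, hX.trans hY.symm, ?_⟩
  have hpos := hmeet.card_pos
  have hle : (X ∩ Y).card ≤ 2 := hX ▸ card_le_card inter_subset_left
  have hne : (X ∩ Y).card ≠ 2 := fun h => hXY <|
    (eq_of_subset_of_card_le inter_subset_left (by omega)).symm.trans
      (eq_of_subset_of_card_le inter_subset_right (by omega))
  omega

theorem mem_verts {C : Finset (Finset V)} {w : V} : w ∈ verts C ↔ ∃ F ∈ C, w ∈ F := by
  simp [verts]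

structure IsDualPathBetween (C : Finset (Finset V)) (P : List (Finset V)) (F G : Finset V) :
    Prop where
  mem : ∀ X ∈ P, X ∈ C
  isChain : P.IsChain AdjFacets
  head : P.head? = some F
  getLast : P.getLast? = some G

namespace IsDualPathBetween

variable {C : Finset (Finset V)} {P Q : List (Finset V)} {F G H : Finset V}

theorem right_mem (h : IsDualPathBetween C P F G) : G ∈ C :=
  h.mem G (List.mem_of_getLast? h.getLast)

theorem singleton (hF : F ∈ C) : IsDualPathBetween C [F] F F :=
  ⟨by simpa using hF, List.isChain_singleton F, rfl, rfl⟩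

theorem cons (hF : F ∈ C) (hFG : AdjFacets F G) (h : IsDualPathBetween C P G H) :
    IsDualPathBetween C (F :: P) F H := by
  obtain ⟨P, rfl⟩ := List.head?_eq_some_iff.1 h.head
  refine ⟨?_, h.isChain.cons_cons hFG, rfl, ?_⟩
  · simpa [hF] using h.mem
  · simpa using h.getLast

theorem append (h₁ : IsDualPathBetween C P F G) (h₂ : IsDualPathBetween C Q G H) :
    IsDualPathBetween C (P ++ Q.tail) F H := by
  obtain ⟨P, rfl⟩ := List.getLast?_eq_some_iff.1 h₁.getLast
  obtain ⟨Q, rfl⟩ := List.head?_eq_some_iff.1 h₂.head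
  have hPG : (P ++ [G] ++ Q).IsChain AdjFacets := by
    refine List.isChain_append.2 ⟨h₁.isChain, h₂.isChain.tail, ?_⟩
    simpa using fun Y hY => h₂.isChain.rel_head? hY
  refine ⟨?_, by simpa using hPG, ?_, ?_⟩
  · intro X hX
    rcases List.mem_append.1 hX with hX | hX
    · exact h₁.mem X hX
    · exact h₂.mem X (List.mem_cons_of_mem G hX)
  · simpa using h₁.head
  · simpa [List.getLast?_cons] using h₂.getLast

theorem map {C' : Finset (Finset V)} {φ : Finset V → Finset V} (h : IsDualPathBetween C P F G)
    (hmem : ∀ X ∈ P, φ X ∈ C')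
    (hadj : ∀ X Y, X ∈ P → Y ∈ P → AdjFacets X Y → AdjFacets (φ X) (φ Y)) :
    IsDualPathBetween C' (P.map φ) (φ F) (φ G) := by
  refine ⟨by simpa using hmem, (List.isChain_map φ).2 (h.isChain.imp_of_mem_imp hadj), ?_, ?_⟩
  · simp [h.head]
  · simp [h.getLast]

theorem length_sub_one_le [Fintype V] {b : ℕ} (h : IsDualPathBetween C P F G)
    (hb : ∀ w, dropCount w P ≤ b) : P.length - 1 ≤ (verts C).card * b := by
  have hout : ∀ w ∈ univ, w ∉ verts C → dropCount w P = 0 := fun w _ hw =>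
    dropCount_eq_zero_of_forall_notMem fun X hX hwX =>
      hw (mem_verts.2 ⟨X, h.mem X hX, hwX⟩)
  calc P.length - 1 = ∑ w, dropCount w P := (sum_dropCount h.isChain).symm
    _ = ∑ w ∈ verts C, dropCount w P := (sum_subset (subset_univ _) hout).symm
    _ ≤ (verts C).card * b := sum_le_card_nsmul _ _ _ fun w _ => hb w

end IsDualPathBetween

section Link

variable {C : Finset (Finset V)} {x : V}

theorem mem_link {f : Finset V} : f ∈ link C x ↔ ∃ F ∈ C, x ∈ F ∧ F.erase x = f := by
  simp [link, and_assoc]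

theorem erase_mem_link {F : Finset V} (hF : F ∈ C) (hx : x ∈ F) : F.erase x ∈ link C x :=
  mem_link.2 ⟨F, hF, hx, rfl⟩

theorem notMem_of_mem_link {f : Finset V} (hf : f ∈ link C x) : x ∉ f := by
  obtain ⟨F, -, -, rfl⟩ := mem_link.1 hf
  exact notMem_erase x F

theorem insert_mem_of_mem_link {f : Finset V} (hf : f ∈ link C x) : insert x f ∈ C := by
  obtain ⟨F, hF, hx, rfl⟩ := mem_link.1 hf
  rwa [insert_erase hx]

theorem adj_of_mem_link {f : Finset V} {w : V} (hf : f ∈ link C x) (hw : w ∈ f) :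
    (skeleton C).Adj x w := by
  obtain ⟨F, hF, hx, rfl⟩ := mem_link.1 hf
  exact ⟨(ne_of_mem_erase hw).symm, F, hF, hx, mem_of_mem_erase hw⟩

theorem link_pure {k : ℕ} (hpure : Pure C (k + 1)) : Pure (link C x) k := by
  intro f hf
  obtain ⟨F, hF, hx, rfl⟩ := mem_link.1 hf
  rw [card_erase_of_mem hx, hpure F hF, Nat.add_sub_cancel]

theorem IsDualPathBetween.map_insert {Q : List (Finset V)} {f g : Finset V}
    (hQ : IsDualPathBetween (link C x) Q f g) :
    IsDualPathBetween C (Q.map (insert x)) (insert x f) (insert x g) :=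
  hQ.map (fun X hX => insert_mem_of_mem_link (hQ.mem X hX)) fun X Y hX hY =>
    (adjFacets_insert_iff (notMem_of_mem_link (hQ.mem X hX))
      (notMem_of_mem_link (hQ.mem Y hY))).2

theorem link_normal (hnormal : Normal C) : Normal (link C x) := by
  intro f A hA B hB hfA hfB
  obtain ⟨A, hAC, hxA, rfl⟩ := mem_link.1 hA
  obtain ⟨B, hBC, hxB, rfl⟩ := mem_link.1 hB
  have hxf : x ∉ f := fun h => notMem_erase x A (hfA h)
  obtain ⟨P, hhead, hlast, hmem, hchain⟩ := hnormal (insert x f) A hAC B hBC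
    (insert_subset hxA (hfA.trans (erase_subset x A)))
    (insert_subset hxB (hfB.trans (erase_subset x B)))
  have hxP : ∀ X ∈ P, x ∈ X := fun X hX => (hmem X hX).2 (mem_insert_self x f)
  have hP : IsDualPathBetween (link C x) (P.map (·.erase x)) (A.erase x) (B.erase x) :=
    IsDualPathBetween.map ⟨fun X hX => (hmem X hX).1, hchain, hhead, hlast⟩
      (fun X hX => erase_mem_link (hmem X hX).1 (hxP X hX)) fun X Y hX hY hXY => by
        rwa [← adjFacets_insert_iff (notMem_erase x X) (notMem_erase x Y),
          insert_erase (hxP X hX), insert_erase (hxP Y hY)]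
  refine ⟨_, hP.head, hP.getLast, fun X hX => ⟨hP.mem X hX, ?_⟩, hP.isChain⟩
  obtain ⟨Y, hY, rfl⟩ := List.mem_map.1 hX
  exact fun z hz => mem_erase.2 ⟨fun h => hxf (h ▸ hz), (hmem Y hY).2 (mem_insert_of_mem hz)⟩

theorem dropCount_map_insert_eq_zero {Q : List (Finset V)} {w : V} (hQ : ∀ f ∈ Q, f ∈ link C x)
    (hw : ¬ (skeleton C).Adj x w) : dropCount w (Q.map (insert x)) = 0 := by
  by_cases hwx : w = x
  · subst hwx
    exact dropCount_eq_zero_of_forall_mem fun X hX => by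
      obtain ⟨f, -, rfl⟩ := List.mem_map.1 hX
      exact mem_insert_self w f
  · rw [dropCount_map_insert hwx]
    exact dropCount_eq_zero_of_forall_notMem fun f hf hwf => hw (adj_of_mem_link (hQ f hf) hwf)

end Link

theorem reachable_of_mem_facet {C : Finset (Finset V)} {F : Finset V} {u v : V} (hF : F ∈ C)
    (hu : u ∈ F) (hv : v ∈ F) : (skeleton C).Reachable u v := by
  by_cases huv : u = v
  · exact huv ▸ SimpleGraph.Reachable.refl u
  · exact SimpleGraph.Adj.reachable ⟨huv, F, hF, hu, hv⟩

theorem Normal.reachable {C : Finset (Finset V)} {k : ℕ} (hnormal : Normal C)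
    (hpure : Pure C k) (hk : 2 ≤ k) {F G : Finset V} {u v : V} (hF : F ∈ C) (hG : G ∈ C)
    (hu : u ∈ F) (hv : v ∈ G) : (skeleton C).Reachable u v := by
  obtain ⟨P, hhead, hlast, hmem, hchain⟩ :=
    hnormal ∅ F hF G hG (empty_subset F) (empty_subset G)
  have hchain' : P.IsChain fun X Y => Y ∈ C ∧ AdjFacets X Y :=
    List.IsChain.imp_of_mem_imp (fun X Y _ hY hXY => ⟨(hmem Y hY).1, hXY⟩) hchain
  refine hchain'.induction (fun X => ∀ v ∈ X, (skeleton C).Reachable u v) P ?_ ?_ G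
    (List.mem_of_getLast? hlast) v hv
  · rintro X Y ⟨hY, hXY⟩ hX v hv
    -- adjacent facets of dimension at least one share a vertex
    have : 0 < (X ∩ Y).card := by
      have := hXY.2.1
      have := hXY.2.2
      have := hpure Y hY
      omega
    obtain ⟨z, hz⟩ := card_pos.1 this
    exact (hX z (mem_inter.1 hz).1).trans (reachable_of_mem_facet hY (mem_inter.1 hz).2 hv)
  · intro hP v hv
    rw [List.head?_eq_some_head hP, Option.some_inj] at hhead
    exact reachable_of_mem_facet hF hu (hhead ▸ hv)

theorem Normal.exists_closest_vertex {C : Finset (Finset V)} {S : Finset V} {k : ℕ}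
    (hnormal : Normal C) (hpure : Pure C k) (hk : 2 ≤ k) (hS : ∃ H ∈ C, (H ∩ S).Nonempty)
    {F : Finset V} (hF : F ∈ C) :
    ∃ x ∈ F, ∃ L : ℕ, distToSet C S x = L ∧ ∀ u ∈ F, (L : ℕ∞) ≤ distToSet C S u := by
  obtain ⟨x, hx, hmin⟩ := exists_min_image F (distToSet C S) (hpure.nonempty hF (by omega))
  obtain ⟨H, hH, s, hs⟩ := hS
  have hfin : distToSet C S x ≠ ⊤ := by
    refine ne_top_of_le_ne_top ?_ (distToSet_le (mem_inter.1 hs).2)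
    exact SimpleGraph.edist_ne_top_iff_reachable.2
      (hnormal.reachable hpure hk hF hH hx (mem_inter.1 hs).1)
  lift distToSet C S x to ℕ using hfin with L hL
  exact ⟨x, hx, L, hL.symm, hL ▸ hmin⟩

def HasSegments (C : Finset (Finset V)) (b : ℕ) : Prop :=
  ∀ S : Finset V, (∃ H ∈ C, (H ∩ S).Nonempty) → ∀ F ∈ C, ∃ P H,
    IsDualPathBetween C P F H ∧ (H ∩ S).Nonempty ∧ (∀ w ∈ S, dropCount w P = 0) ∧
      ∀ w, dropCount w P ≤ b

def HasDualPaths (C : Finset (Finset V)) (b : ℕ) : Prop :=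
  ∀ F ∈ C, ∀ G ∈ C, ∃ P, IsDualPathBetween C P F G ∧ ∀ w, dropCount w P ≤ b

/-- The number of `j ∈ [1, L]` with `m ∈ {j, j + 1}`: the stages of a walk started at distance `L`
at which a vertex at distance `m` can be dropped. -/
def levelWeight (L : ℕ) (m : ℕ∞) : ℕ :=
  (if 1 ≤ m ∧ m ≤ L then 1 else 0) + (if 2 ≤ m ∧ m ≤ L + 1 then 1 else 0)

theorem levelWeight_succ (L : ℕ) (m : ℕ∞) :
    levelWeight (L + 1) m = (if m = L + 1 ∨ m = L + 2 then 1 else 0) + levelWeight L m := by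
  induction m using ENat.recTopCoe with
  | top =>
    simp only [levelWeight]
    norm_cast
  | coe m =>
    simp only [levelWeight]
    norm_cast
    split_ifs <;> omega

theorem levelWeight_le_two (L : ℕ) (m : ℕ∞) : levelWeight L m ≤ 2 := by
  unfold levelWeight
  split_ifs <;> omega

theorem levelWeight_le_one_of_le_one (L : ℕ) {m : ℕ∞} (hm : m ≤ 1) : levelWeight L m ≤ 1 := by
  have : ¬ (2 ≤ m) := fun h => absurd (h.trans hm) (by decide)
  simp only [levelWeight, this, false_and, if_false]
  split_ifs <;> omega

theorem levelWeight_zero_right (L : ℕ) : levelWeight L 0 = 0 := by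
  simp [levelWeight]

section Segments

variable {C : Finset (Finset V)} {b : ℕ}

/-- The targets in the link of `x` are the neighbours of `x` at distance `L`, and every other
vertex dropped inside the star of `x` is a neighbour of `x`, at distance `L + 1` or `L + 2`. -/
theorem exists_lifted_segment (hlinks : ∀ x, HasSegments (link C x) b) {S F : Finset V} {x : V}
    {L : ℕ} (hF : F ∈ C) (hx : x ∈ F) (hxL : distToSet C S x = L + 1) :
    ∃ P H, IsDualPathBetween C P F H ∧ (∃ y ∈ H, distToSet C S y = L) ∧
      ∀ w, dropCount w P ≤
        b * if distToSet C S w = L + 1 ∨ distToSet C S w = L + 2 then 1 else 0 := by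
  obtain ⟨y, hxy, hyL⟩ := exists_adj_distToSet_eq hxL
  obtain ⟨hxy, F₀, hF₀, hxF₀, hyF₀⟩ := hxy
  set T := (verts C).filter fun w => distToSet C S w = L
  obtain ⟨Q, h, hQ, ⟨y', hy'⟩, hT, hb⟩ := hlinks x T
    ⟨F₀.erase x, erase_mem_link hF₀ hxF₀, y, mem_inter.2 ⟨mem_erase.2 ⟨hxy.symm, hyF₀⟩,
      mem_filter.2 ⟨mem_verts.2 ⟨F₀, hF₀, hyF₀⟩, hyL⟩⟩⟩
    (F.erase x) (erase_mem_link hF hx)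
  refine ⟨Q.map (insert x), insert x h, insert_erase hx ▸ hQ.map_insert,
    ⟨y', mem_insert_of_mem (mem_inter.1 hy').1, (mem_filter.1 (mem_inter.1 hy').2).2⟩,
    fun w => ?_⟩
  by_cases hw : (skeleton C).Adj x w
  · rw [dropCount_map_insert hw.ne']
    have hlow := distToSet_le_add_one_of_adj (S := S) hw
    have hup := distToSet_le_add_one_of_adj (S := S) hw.symm
    rw [hxL] at hlow hup
    lift distToSet C S w to ℕ using ne_top_of_le_ne_top (by simp) hup with m hm
    norm_cast at hlow hup ⊢
    by_cases hmL : m = L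
    · obtain ⟨-, X, hX, -, hwX⟩ := hw
      rw [hT w (mem_filter.2 ⟨mem_verts.2 ⟨X, hX, hwX⟩, by rw [← hm, hmL]⟩)]
      exact Nat.zero_le _
    · rw [if_pos (by omega), mul_one]
      exact hb w
  · rw [dropCount_map_insert_eq_zero hQ.mem hw]
    exact Nat.zero_le _

theorem exists_segment_of_distToSet_eq (hlinks : ∀ x, HasSegments (link C x) b) (S : Finset V)
    (L : ℕ) : ∀ F ∈ C, ∀ x ∈ F, distToSet C S x = L → ∃ P H, IsDualPathBetween C P F H ∧
      (H ∩ S).Nonempty ∧ ∀ w, dropCount w P ≤ b * levelWeight L (distToSet C S w) := by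
  induction L with
  | zero =>
    intro F hF x hx hxL
    exact ⟨[F], F, .singleton hF, ⟨x, mem_inter.2 ⟨hx, distToSet_eq_zero_iff.1 hxL⟩⟩, by simp⟩
  | succ L ih =>
    intro F hF x hx hxL
    obtain ⟨P₁, H₁, hP₁, ⟨y, hy, hyL⟩, hb₁⟩ :=
      exists_lifted_segment hlinks hF hx (by rw [hxL]; push_cast; rfl)
    obtain ⟨P₂, H, hP₂, hHS, hb₂⟩ := ih H₁ hP₁.right_mem y hy hyL
    refine ⟨P₁ ++ P₂.tail, H, hP₁.append hP₂, hHS, fun w => ?_⟩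
    rw [dropCount_append_tail hP₁.getLast hP₂.head, levelWeight_succ, mul_add]
    exact add_le_add (hb₁ w) (hb₂ w)

theorem exists_segment_of_links {k : ℕ} (hnormal : Normal C) (hpure : Pure C k) (hk : 2 ≤ k)
    (hlinks : ∀ x, HasSegments (link C x) b) {S F : Finset V} (hS : ∃ H ∈ C, (H ∩ S).Nonempty)
    (hF : F ∈ C) : ∃ P H, IsDualPathBetween C P F H ∧ (H ∩ S).Nonempty ∧
      (∀ w ∈ S, dropCount w P = 0) ∧ (∀ w, distToSet C S w = 1 → dropCount w P ≤ b) ∧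
      ∀ w, dropCount w P ≤ 2 * b := by
  obtain ⟨x, hx, L, hxL, -⟩ := hnormal.exists_closest_vertex hpure hk hS hF
  obtain ⟨P, H, hP, hHS, hb⟩ := exists_segment_of_distToSet_eq hlinks S L F hF x hx hxL
  refine ⟨P, H, hP, hHS, fun w hw => ?_, fun w hw => ?_, fun w => ?_⟩
  · simpa [distToSet_eq_zero_iff.2 hw, levelWeight_zero_right] using hb w
  · calc dropCount w P ≤ b * levelWeight L (distToSet C S w) := hb w
      _ ≤ b * 1 := Nat.mul_le_mul_left b (levelWeight_le_one_of_le_one L hw.le)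
      _ = b := mul_one b
  · calc dropCount w P ≤ b * levelWeight L (distToSet C S w) := hb w
      _ ≤ b * 2 := Nat.mul_le_mul_left b (levelWeight_le_two L _)
      _ = 2 * b := mul_comm b 2

theorem hasSegments_of_links {k : ℕ} (hnormal : Normal C) (hpure : Pure C k) (hk : 2 ≤ k)
    (hlinks : ∀ x, HasSegments (link C x) b) : HasSegments C (2 * b) := by
  intro S hS F hF
  obtain ⟨P, H, hP, hHS, hS₀, -, hb⟩ := exists_segment_of_links hnormal hpure hk hlinks hS hF
  exact ⟨P, H, hP, hHS, hS₀, hb⟩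

theorem hasDualPaths_of_links {k : ℕ} (hnormal : Normal C) (hpure : Pure C k) (hk : 2 ≤ k)
    (hsegments : ∀ x, HasSegments (link C x) b) (hpaths : ∀ x, HasDualPaths (link C x) b) :
    HasDualPaths C (2 * b) := by
  intro F hF G hG
  obtain ⟨P₁, H, hP₁, ⟨x, hx⟩, hG₀, hG₁, hb₁⟩ := exists_segment_of_links (S := G) hnormal hpure hk
    hsegments ⟨G, hG, by simpa using hpure.nonempty hG (by omega)⟩ hF
  obtain ⟨hxH, hxG⟩ := mem_inter.1 hx
  obtain ⟨Q, hQ, hbQ⟩ := hpaths x (H.erase x) (erase_mem_link hP₁.right_mem hxH)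
    (G.erase x) (erase_mem_link hG hxG)
  have hP₂ : IsDualPathBetween C (Q.map (insert x)) H G := by
    simpa [insert_erase hxH, insert_erase hxG] using hQ.map_insert
  refine ⟨P₁ ++ (Q.map (insert x)).tail, hP₁.append hP₂, fun w => ?_⟩
  rw [dropCount_append_tail hP₁.getLast hP₂.head]
  by_cases hw : (skeleton C).Adj x w
  · rw [dropCount_map_insert hw.ne']
    by_cases hwG : w ∈ G
    · rw [hG₀ w hwG, zero_add]
      exact (hbQ w).trans (by omega)
    · have := hG₁ w (distToSet_eq_one_of_adj hxG hwG hw.symm)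
      have := hbQ w
      omega
  · rw [dropCount_map_insert_eq_zero hQ.mem hw, add_zero]
    exact hb₁ w

theorem exists_graph_segment_of_distToSet_eq {S : Finset V} (hpure : Pure C 2) (L : ℕ) :
    ∀ F ∈ C, ∀ x ∈ F, distToSet C S x = L → (∀ u ∈ F, (L : ℕ∞) ≤ distToSet C S u) →
    ∃ P H, IsDualPathBetween C P F H ∧ (H ∩ S).Nonempty ∧
      (∀ X ∈ P.tail, ∀ w ∈ X, distToSet C S w ≤ L) ∧
      ∀ w, dropCount w P ≤ if w ∈ H ∨ w ∈ S then 0 else 1 := by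
  induction L with
  | zero =>
    rintro F hF x hx hxL -
    exact ⟨[F], F, .singleton hF, ⟨x, mem_inter.2 ⟨hx, distToSet_eq_zero_iff.1 hxL⟩⟩,
      by simp, by simp⟩
  | succ L ih =>
    intro F hF x hx hxL hmin
    obtain ⟨y, ⟨hxy, F₀, hF₀, hxF₀, hyF₀⟩, hyL⟩ :=
      exists_adj_distToSet_eq (S := S) (by rw [hxL]; push_cast; rfl)
    have hF₀xy : F₀ = {x, y} := (eq_of_subset_of_card_le
      (insert_subset hxF₀ (singleton_subset_iff.2 hyF₀))
      (by rw [hpure F₀ hF₀, card_pair hxy])).symm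
    have hF₀L : ∀ w ∈ F₀, distToSet C S w ≤ L + 1 := by
      simp only [hF₀xy, mem_insert, mem_singleton, forall_eq_or_imp, forall_eq, hxL, hyL]
      push_cast
      exact ⟨le_rfl, le_self_add⟩
    have hF₀min : ∀ u ∈ F₀, (L : ℕ∞) ≤ distToSet C S u := by
      simp only [hF₀xy, mem_insert, mem_singleton, forall_eq_or_imp, forall_eq, hxL, hyL]
      push_cast
      exact ⟨le_self_add, le_rfl⟩
    obtain ⟨P, H, hP, hHS, htail, hb⟩ := ih F₀ hF₀ y hyF₀ hyL hF₀min
    obtain ⟨P, rfl⟩ := List.head?_eq_some_iff.1 hP.head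
    by_cases hFF₀ : F = F₀
    · subst hFF₀
      exact ⟨_, H, hP, hHS, fun X hX w hw => (htail X hX w hw).trans (by simp), hb⟩
    -- the vertex of `F` other than `x` is dropped at the first step and never seen again
    have hfresh : ∀ w ∈ F, w ∉ F₀ → ∀ X ∈ F₀ :: P, w ∉ X := by
      intro w hwF hwF₀ X hX hwX
      rcases List.mem_cons.1 hX with rfl | hX
      · exact hwF₀ hwX
      · have := (hmin w hwF).trans (htail X hX w hwX)
        norm_cast at this
        omega
    refine ⟨F :: F₀ :: P, H, hP.cons hF (adjFacets_of_card_eq_two (hpure F hF) (hpure F₀ hF₀)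
      hFF₀ ⟨x, mem_inter.2 ⟨hx, hxF₀⟩⟩), hHS, ?_, fun w => ?_⟩
    · rintro X (hX | ⟨_, hX⟩)
      · exact hF₀L
      · exact fun w hw => (htail X hX w hw).trans (by simp)
    rw [dropCount_cons hP.head]
    by_cases hw : w ∈ F ∧ w ∉ F₀
    · rw [if_pos hw, dropCount_eq_zero_of_forall_notMem (hfresh w hw.1 hw.2), if_neg]
      rintro (hwH | hwS)
      · exact hfresh w hw.1 hw.2 H (List.mem_of_getLast? hP.getLast) hwH
      · simpa [distToSet_eq_zero_iff.2 hwS] using hmin w hw.1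
    · rw [if_neg hw, zero_add]
      exact hb w

theorem Normal.exists_graph_segment {S F : Finset V} (hnormal : Normal C) (hpure : Pure C 2)
    (hS : ∃ H ∈ C, (H ∩ S).Nonempty) (hF : F ∈ C) :
    ∃ P H, IsDualPathBetween C P F H ∧ (H ∩ S).Nonempty ∧
      ∀ w, dropCount w P ≤ if w ∈ H ∨ w ∈ S then 0 else 1 := by
  obtain ⟨x, hx, L, hxL, hmin⟩ := hnormal.exists_closest_vertex hpure le_rfl hS hF
  obtain ⟨P, H, hP, hHS, -, hb⟩ :=
    exists_graph_segment_of_distToSet_eq hpure L F hF x hx hxL hmin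
  exact ⟨P, H, hP, hHS, hb⟩

theorem hasSegments_of_pure_two (hnormal : Normal C) (hpure : Pure C 2) : HasSegments C 1 := by
  intro S hS F hF
  obtain ⟨P, H, hP, hHS, hb⟩ := hnormal.exists_graph_segment hpure hS hF
  refine ⟨P, H, hP, hHS, fun w hw => by simpa [hw] using hb w, fun w => (hb w).trans ?_⟩
  split_ifs <;> omega

theorem hasDualPaths_of_pure_two (hnormal : Normal C) (hpure : Pure C 2) :
    HasDualPaths C 1 := by
  intro F hF G hG
  obtain ⟨P, H, hP, ⟨x, hx⟩, hb⟩ :=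
    hnormal.exists_graph_segment (S := G) hpure
      ⟨G, hG, by simpa using hpure.nonempty hG (by omega)⟩ hF
  by_cases hHG : H = G
  · subst hHG
    exact ⟨P, hP, fun w => (hb w).trans (by split_ifs <;> omega)⟩
  have hHG' : IsDualPathBetween C [H, G] H G :=
    .cons hP.right_mem (adjFacets_of_card_eq_two (hpure H hP.right_mem) (hpure G hG) hHG ⟨x, hx⟩)
      (.singleton hG)
  refine ⟨P ++ [H, G].tail, hP.append hHG', fun w => ?_⟩
  rw [dropCount_append_tail hP.getLast rfl, dropCount_cons_cons, dropCount_singleton, add_zero]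
  have := hb w
  by_cases hwH : w ∈ H
  · simp only [hwH, true_or, if_true] at this
    split_ifs <;> omega
  · simp only [hwH, false_and, if_false]
    split_ifs at this <;> omega

end Segments

theorem hasSegments_and_hasDualPaths {k : ℕ} (hk : 2 ≤ k) :
    ∀ {C : Finset (Finset V)}, Normal C → Pure C k →
      HasSegments C (2 ^ (k - 2)) ∧ HasDualPaths C (2 ^ (k - 2)) := by
  induction k, hk using Nat.le_induction with
  | base => exact fun hnormal hpure =>
      ⟨hasSegments_of_pure_two hnormal hpure, hasDualPaths_of_pure_two hnormal hpure⟩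
  | succ k hk ih =>
    intro C hnormal hpure
    have hlinks (x : V) := ih (link_normal (x := x) hnormal) (link_pure hpure)
    rw [show k + 1 - 2 = k - 2 + 1 by omega, pow_succ']
    exact ⟨hasSegments_of_links hnormal hpure (by omega) fun x => (hlinks x).1,
      hasDualPaths_of_links hnormal hpure (by omega) (fun x => (hlinks x).1) fun x => (hlinks x).2⟩

end MCP

open MCP in
/-- Barnette–Larman bound for the dual diameter: in a pure normal
`(d-1)`-complex on `n` vertices with `d ≥ 2`, any two facets are joined by a dual path
of length at most `n * 2 ^ (d - 2)`. -/
theorem statement12 {V : Type} [DecidableEq V] [Fintype V] (d n : ℕ) (hd : 2 ≤ d)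
    (C : Finset (Finset V)) (hpure : Pure C d) (hnormal : Normal C)
    (hn : (verts C).card = n) :
    ∀ F ∈ C, ∀ G ∈ C, ∃ P : List (Finset V), IsDualPath C P ∧
      P.head? = some F ∧ P.getLast? = some G ∧ P.length - 1 ≤ n * 2 ^ (d - 2) := by
  intro F hF G hG
  obtain ⟨P, hP, hb⟩ := (hasSegments_and_hasDualPaths hd hnormal hpure).2 F hF G hG
  exact ⟨P, ⟨hP.mem, hP.isChain⟩, hP.head, hP.getLast, hn ▸ hP.length_sub_one_le hb⟩
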